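/- arXiv:1309.6720 — 5 statements merged into one kernel-verified Lean document; each statement's English description precedes it below -/
import Mathlib

section
/- For every natural number n ≥ 0, the quartered Aztec diamonds of orders 4n+1 and 4n+2 have no domino tilings: T(R(4n+1)) = 0 and T(R(4n+2)) = 0. -/
open Finset

/-- A domino: a set of two cells sharing an edge. -/
def IsDomino (d : Finset (ℤ × ℤ)) : Prop :=
  ∃ c c' : ℤ × ℤ, |c.1 - c'.1| + |c.2 - c'.2| = 1 ∧ d = {c, c'}

/-- `P` is a tiling of the region `R`: a partition of `R` into dominoes. -/
def IsTiling (R : Set (ℤ × ℤ)) (P : Set (Finset (ℤ × ℤ))) : Prop :=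
  (∀ d ∈ P, IsDomino d) ∧ P.PairwiseDisjoint id ∧ (⋃ d ∈ P, (d : Set (ℤ × ℤ))) = R

/-- `T R`: the number of domino tilings of the region `R`. -/
noncomputable def numTilings (R : Set (ℤ × ℤ)) : ℕ :=
  Set.ncard {P : Set (Finset (ℤ × ℤ)) | IsTiling R P}

/-- The Aztec diamond of order `n`. -/
def AD (n : ℕ) : Set (ℤ × ℤ) :=
  {c | |2 * c.1 + 1| + |2 * c.2 + 1| ≤ 2 * (n : ℤ)}

/-- The quartered Aztec diamond `R(n)`. -/
def Rqad (n : ℕ) : Set (ℤ × ℤ) :=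
  {c | c ∈ AD n ∧ 2 * ((c.1 + 1).fdiv 2) ≤ c.2 ∧ -2 * (c.1.fdiv 2) - 1 ≤ c.2}

/-- The abutting quartered Aztec diamond `K_a(n)`. -/
def Ka (n : ℕ) : Set (ℤ × ℤ) :=
  {c | c ∈ AD n ∧ 2 * ((c.1 + 1).fdiv 2) ≤ c.2 ∧ -2 * ((c.1 + 1).fdiv 2) ≤ c.2}

/-- The non-abutting quartered Aztec diamond `K_na(n)`. -/
def Kna (n : ℕ) : Set (ℤ × ℤ) :=
  {c | c ∈ AD n ∧ -2 * ((c.1 + 1).fdiv 2) ≤ c.2 ∧ c.2 ≤ 2 * ((c.1 + 1).fdiv 2) - 1}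

/-!
A domino covers two cells, so a finite region with a tiling has an even number of cells.
The quarter turn `(a, b) ↦ (b, -1 - a)` about the centre of `AD m` permutes cyclically four
copies of `R(m)` that partition `AD m`, and likewise the four quadrants of `AD m`; hence `R(m)`
has as many cells as the quadrant `{a, b ≥ 0, a + b < m}`, namely `m (m + 1) / 2`, which is odd
exactly when `m ≡ 1, 2 (mod 4)`.
-/

lemma IsDomino.card_eq_two {d : Finset (ℤ × ℤ)} (hd : IsDomino d) : d.card = 2 := by
  obtain ⟨c, c', hcc', rfl⟩ := hd
  refine Finset.card_pair fun h => ?_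
  simp [h] at hcc'

lemma IsTiling.finite {R : Set (ℤ × ℤ)} {P : Set (Finset (ℤ × ℤ))} (hP : IsTiling R P)
    (hR : R.Finite) : P.Finite := by
  refine (hR.finite_subsets.preimage Finset.coe_injective.injOn).subset fun d hd => ?_
  show (d : Set (ℤ × ℤ)) ⊆ R
  rw [← hP.2.2]
  exact Set.subset_biUnion_of_mem (u := fun d : Finset (ℤ × ℤ) => (d : Set (ℤ × ℤ))) hd

lemma IsTiling.even_ncard {R : Set (ℤ × ℤ)} {P : Set (Finset (ℤ × ℤ))} (hP : IsTiling R P) :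
    Even R.ncard := by
  obtain hR | hR := R.finite_or_infinite
  · have hPfin := hP.finite hR
    obtain ⟨hdom, hdisj, hcover⟩ := hP
    rw [← hcover, hPfin.ncard_biUnion (fun d _ => d.finite_toSet)
      (fun d hd d' hd' h => Finset.disjoint_coe.2 (hdisj hd hd' h))]
    exact finsum_mem_induction Even .zero (fun _ _ => Even.add) fun d hd => by
      simp [(hdom d hd).card_eq_two]
  · simp [hR.ncard]

lemma numTilings_eq_zero_of_odd_ncard {R : Set (ℤ × ℤ)} (h : Odd R.ncard) :
    numTilings R = 0 := by
  have hempty : {P | IsTiling R P} = ∅ :=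
    Set.eq_empty_of_forall_notMem fun P hP => Nat.not_even_iff_odd.2 h (IsTiling.even_ncard hP)
  rw [numTilings, hempty, Set.ncard_empty]

lemma Set.ncard_eq_mul_ncard_of_existsUnique_pow {α : Type*} (e : Equiv.Perm α) (k : ℕ)
    {X : Set α} (hX : ∀ x, e x ∈ X ↔ x ∈ X) (p : α → Prop)
    (hp : ∀ x, ∃! i : Fin k, p ((e ^ (i : ℕ)) x)) : X.ncard = k * {x ∈ X | p x}.ncard := by
  have hXpow : ∀ (n : ℕ) x, (e ^ n) x ∈ X ↔ x ∈ X := by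
    intro n
    induction n with
    | zero => simp
    | succ n ih => intro x; rw [pow_succ', Equiv.Perm.mul_apply, hX, ih]
  let f : Fin k × {x ∈ X | p x} → X := fun is =>
    ⟨(e ^ (is.1 : ℕ)).symm is.2, (hXpow _ _).1 (by rw [Equiv.apply_symm_apply]; exact is.2.2.1)⟩
  have hf : Function.Bijective f := by
    constructor
    · rintro ⟨i, s, hs⟩ ⟨j, t, ht⟩ hst
      simp only [f, Subtype.mk.injEq] at hst
      have hij : i = j := (hp _).unique (by rw [Equiv.apply_symm_apply]; exact hs.2)
        (by rw [hst, Equiv.apply_symm_apply]; exact ht.2)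
      subst hij
      simpa using hst
    · rintro ⟨x, hx⟩
      obtain ⟨i, hi, -⟩ := hp x
      exact ⟨(i, ⟨(e ^ (i : ℕ)) x, (hXpow _ _).2 hx, hi⟩), by simp [f]⟩
  rw [← Nat.card_coe_set_eq, ← Nat.card_eq_of_bijective f hf, Nat.card_prod, Nat.card_fin,
    Nat.card_coe_set_eq]

def quarterTurn : Equiv.Perm (ℤ × ℤ) where
  toFun c := (c.2, -1 - c.1)
  invFun c := (-1 - c.2, c.1)
  left_inv c := by simp
  right_inv c := by simp

@[simp]
lemma quarterTurn_apply (c : ℤ × ℤ) : quarterTurn c = (c.2, -1 - c.1) := rfl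

lemma quarterTurn_mem_AD_iff (m : ℕ) (c : ℤ × ℤ) : quarterTurn c ∈ AD m ↔ c ∈ AD m := by
  simp only [AD, Set.mem_ofPred_eq, quarterTurn_apply, Int.abs_eq_natAbs]
  omega

lemma AD_finite (m : ℕ) : (AD m).Finite := by
  refine ((Set.finite_Icc (-m : ℤ) m).prod (Set.finite_Icc (-m : ℤ) m)).subset ?_
  rintro ⟨a, b⟩ h
  simp only [AD, Set.mem_ofPred_eq, Int.abs_eq_natAbs] at h
  simp only [Set.mem_prod, Set.mem_Icc]
  omega

def quadrantAD (m : ℕ) : Set (ℤ × ℤ) := {c ∈ AD m | 0 ≤ c.1 ∧ 0 ≤ c.2}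

lemma existsUnique_quarterTurn_pow_mem_quadrant (c : ℤ × ℤ) :
    ∃! i : Fin 4, 0 ≤ ((quarterTurn ^ (i : ℕ)) c).1 ∧ 0 ≤ ((quarterTurn ^ (i : ℕ)) c).2 := by
  simp only [ExistsUnique, Fin.exists_fin_succ, Fin.forall_fin_succ]
  simp [pow_succ]
  omega

lemma existsUnique_quarterTurn_pow_mem_sector (c : ℤ × ℤ) :
    ∃! i : Fin 4,
      2 * ((((quarterTurn ^ (i : ℕ)) c).1 + 1).fdiv 2) ≤ ((quarterTurn ^ (i : ℕ)) c).2 ∧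
        -2 * (((quarterTurn ^ (i : ℕ)) c).1.fdiv 2) - 1 ≤ ((quarterTurn ^ (i : ℕ)) c).2 := by
  simp only [ExistsUnique, Fin.exists_fin_succ, Fin.forall_fin_succ,
    Int.fdiv_eq_ediv_of_nonneg _ (zero_le_two : (0 : ℤ) ≤ 2)]
  simp [pow_succ]
  omega

lemma ncard_AD_eq_four_mul_ncard_Rqad (m : ℕ) : (AD m).ncard = 4 * (Rqad m).ncard :=
  Set.ncard_eq_mul_ncard_of_existsUnique_pow quarterTurn 4 (quarterTurn_mem_AD_iff m) _
    existsUnique_quarterTurn_pow_mem_sector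

lemma ncard_AD_eq_four_mul_ncard_quadrantAD (m : ℕ) : (AD m).ncard = 4 * (quadrantAD m).ncard :=
  Set.ncard_eq_mul_ncard_of_existsUnique_pow quarterTurn 4 (quarterTurn_mem_AD_iff m) _
    existsUnique_quarterTurn_pow_mem_quadrant

lemma quadrantAD_succ (m : ℕ) :
    quadrantAD (m + 1) = quadrantAD m ∪ (fun a : ℕ => ((a : ℤ), (m : ℤ) - a)) '' Set.Icc 0 m := by
  ext ⟨a, b⟩
  simp only [quadrantAD, AD, Set.mem_ofPred_eq, Set.mem_union, Set.mem_image, Set.mem_Icc,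
    Prod.mk.injEq, Int.abs_eq_natAbs]
  constructor
  · intro h
    by_cases hab : a + b = m
    · exact Or.inr ⟨a.toNat, by omega, by omega, by omega⟩
    · exact Or.inl (by omega)
  · rintro (h | ⟨k, hk, rfl, rfl⟩) <;> omega

lemma two_mul_ncard_quadrantAD (m : ℕ) : 2 * (quadrantAD m).ncard = m * (m + 1) := by
  induction m with
  | zero =>
    have : quadrantAD 0 = ∅ := by
      ext ⟨a, b⟩
      simp only [quadrantAD, AD, Set.mem_ofPred_eq, Int.abs_eq_natAbs, Set.mem_empty_iff_false,
        iff_false]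
      omega
    simp [this]
  | succ m ih =>
    have hdisj :
        Disjoint (quadrantAD m) ((fun a : ℕ => ((a : ℤ), (m : ℤ) - a)) '' Set.Icc 0 m) := by
      rw [Set.disjoint_left]
      rintro ⟨a, b⟩ h ⟨k, -, hk⟩
      simp only [quadrantAD, AD, Set.mem_ofPred_eq, Int.abs_eq_natAbs, Prod.mk.injEq] at h hk
      omega
    have hinj : Function.Injective fun a : ℕ => ((a : ℤ), (m : ℤ) - a) :=
      fun a a' h => by simpa using congrArg Prod.fst h
    rw [quadrantAD_succ, Set.ncard_union_eq hdisj ((AD_finite m).subset fun c hc => hc.1)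
      ((Set.finite_Icc 0 m).image _), Set.ncard_image_of_injective _ hinj, Set.ncard_Icc_nat,
      Nat.sub_zero]
    linarith

lemma two_mul_ncard_Rqad (m : ℕ) : 2 * (Rqad m).ncard = m * (m + 1) := by
  have h := (ncard_AD_eq_four_mul_ncard_Rqad m).symm.trans
    (ncard_AD_eq_four_mul_ncard_quadrantAD m)
  rw [← two_mul_ncard_quadrantAD]
  omega

/-- The quartered Aztec diamonds of orders `4n+1` and `4n+2` have no tilings. -/
theorem quartered_aztec_diamond_no_tilings (n : ℕ) :
    numTilings (Rqad (4 * n + 1)) = 0 ∧ numTilings (Rqad (4 * n + 2)) = 0 := by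
  have h₁ : (Rqad (4 * n + 1)).ncard = 2 * (4 * n ^ 2 + 3 * n) + 1 := by
    linarith [two_mul_ncard_Rqad (4 * n + 1)]
  have h₂ : (Rqad (4 * n + 2)).ncard = 2 * (4 * n ^ 2 + 5 * n + 1) + 1 := by
    linarith [two_mul_ncard_Rqad (4 * n + 2)]
  exact ⟨numTilings_eq_zero_of_odd_ncard (h₁ ▸ odd_two_mul_add_one _),
    numTilings_eq_zero_of_odd_ncard (h₂ ▸ odd_two_mul_add_one _)⟩
end

section
/- For every natural number n ≥ 1, T(K_a(4n−2)) = T(K_a(4n)). -/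
open Finset

lemma ka_mem (n : ℕ) (c : ℤ × ℤ) :
    c ∈ Ka n ↔ ((2*c.1+1).natAbs + (2*c.2+1).natAbs ≤ 2*n ∧
      2*((c.1+1)/2) ≤ c.2 ∧ -2*((c.1+1)/2) ≤ c.2) := by
  have h1 : (c.1 + 1).fdiv 2 = (c.1+1)/2 := Int.fdiv_eq_ediv_of_nonneg _ (by norm_num)
  simp only [Ka, AD, Set.mem_setOf_eq, h1, Int.abs_eq_natAbs]
  omega

def Lb (n : ℕ) (b : ℤ) : Finset (ℤ × ℤ) := {(b - 4*(n:ℤ), b), (b - 4*(n:ℤ) + 1, b)}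
def Rb (n : ℕ) (b : ℤ) : Finset (ℤ × ℤ) := {(4*(n:ℤ) - 2 - b, b), (4*(n:ℤ) - 1 - b, b)}

def Fn (n : ℕ) : Set (Finset (ℤ × ℤ)) :=
  {d | ∃ b : ℤ, 2*(n:ℤ) ≤ b ∧ b ≤ 4*(n:ℤ) - 1 ∧ (d = Lb n b ∨ d = Rb n b)}

lemma Lb_domino (n : ℕ) (b : ℤ) : IsDomino (Lb n b) := by
  refine ⟨(b - 4*(n:ℤ), b), (b - 4*(n:ℤ) + 1, b), ?_, rfl⟩
  simp only [Int.abs_eq_natAbs]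
  omega

lemma Rb_domino (n : ℕ) (b : ℤ) : IsDomino (Rb n b) := by
  refine ⟨(4*(n:ℤ) - 2 - b, b), (4*(n:ℤ) - 1 - b, b), ?_, rfl⟩
  simp only [Int.abs_eq_natAbs]
  omega

lemma mem_Lb {n : ℕ} {b : ℤ} {x : ℤ × ℤ} :
    x ∈ Lb n b ↔ (x.1 = b - 4*(n:ℤ) ∨ x.1 = b - 4*(n:ℤ) + 1) ∧ x.2 = b := by
  simp [Lb, Prod.ext_iff]; tauto

lemma mem_Rb {n : ℕ} {b : ℤ} {x : ℤ × ℤ} :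
    x ∈ Rb n b ↔ (x.1 = 4*(n:ℤ) - 2 - b ∨ x.1 = 4*(n:ℤ) - 1 - b) ∧ x.2 = b := by
  simp [Rb, Prod.ext_iff]; tauto

lemma mem_Fn_cells (n : ℕ) (hn : 1 ≤ n) (x : ℤ × ℤ) :
    (∃ d ∈ Fn n, x ∈ d) ↔ (x ∈ Ka (4*n) ∧ x ∉ Ka (4*n-2)) := by
  constructor
  · rintro ⟨d, ⟨b, hb1, hb2, (rfl | rfl)⟩, hx⟩ <;>
      [rw [mem_Lb] at hx; rw [mem_Rb] at hx] <;>
      rw [ka_mem, ka_mem] <;> omega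
  · rintro ⟨h1, h2⟩
    rw [ka_mem] at h1 h2
    have key : (2*(n:ℤ) ≤ x.2 ∧ x.2 ≤ 4*(n:ℤ) - 1) ∧
        (x.1 = x.2 - 4*(n:ℤ) ∨ x.1 = x.2 - 4*(n:ℤ) + 1 ∨
         x.1 = 4*(n:ℤ) - 2 - x.2 ∨ x.1 = 4*(n:ℤ) - 1 - x.2) := by omega
    rcases key.2 with h | h | h | h
    · exact ⟨Lb n x.2, ⟨x.2, key.1.1, key.1.2, Or.inl rfl⟩, mem_Lb.mpr ⟨Or.inl h, rfl⟩⟩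
    · exact ⟨Lb n x.2, ⟨x.2, key.1.1, key.1.2, Or.inl rfl⟩, mem_Lb.mpr ⟨Or.inr h, rfl⟩⟩
    · exact ⟨Rb n x.2, ⟨x.2, key.1.1, key.1.2, Or.inr rfl⟩, mem_Rb.mpr ⟨Or.inl h, rfl⟩⟩
    · exact ⟨Rb n x.2, ⟨x.2, key.1.1, key.1.2, Or.inr rfl⟩, mem_Rb.mpr ⟨Or.inr h, rfl⟩⟩

lemma Fn_inter {n : ℕ} {d d' : Finset (ℤ × ℤ)} (hd : d ∈ Fn n) (hd' : d' ∈ Fn n)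
    {x : ℤ × ℤ} (hx : x ∈ d) (hx' : x ∈ d') : d = d' := by
  obtain ⟨b, hb1, hb2, hcase⟩ := hd
  obtain ⟨b', hb1', hb2', hcase'⟩ := hd'
  rcases hcase with rfl | rfl <;> rcases hcase' with rfl | rfl <;>
    (simp only [mem_Lb, mem_Rb] at hx hx'; ext y; simp only [mem_Lb, mem_Rb]; omega)

lemma tiling_cover {R P} (h : IsTiling R P) {x : ℤ × ℤ} (hx : x ∈ R) :
    ∃ d ∈ P, x ∈ d := by
  rw [← h.2.2] at hx
  simpa using hx

lemma tiling_unique {R P} (h : IsTiling R P) {d d' : Finset (ℤ × ℤ)}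
    (hd : d ∈ P) (hd' : d' ∈ P) {x : ℤ × ℤ} (hx : x ∈ d) (hx' : x ∈ d') : d = d' := by
  by_contra hne
  exact (Finset.disjoint_left.mp (h.2.1 hd hd' hne)) hx hx'

lemma tiling_subset {R P} (h : IsTiling R P) {d : Finset (ℤ × ℤ)} (hd : d ∈ P)
    {x : ℤ × ℤ} (hx : x ∈ d) : x ∈ R := by
  rw [← h.2.2]
  exact Set.mem_biUnion hd hx

lemma domino_cases {d : Finset (ℤ × ℤ)} (h : IsDomino d) {x : ℤ × ℤ} (hx : x ∈ d) :
    ∃ y : ℤ × ℤ, d = {x, y} ∧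
      ((y.1 = x.1 + 1 ∧ y.2 = x.2) ∨ (y.1 = x.1 - 1 ∧ y.2 = x.2) ∨
       (y.1 = x.1 ∧ y.2 = x.2 + 1) ∨ (y.1 = x.1 ∧ y.2 = x.2 - 1)) := by
  obtain ⟨c, c', habs, rfl⟩ := h
  rw [Int.abs_eq_natAbs, Int.abs_eq_natAbs] at habs
  rcases Finset.mem_insert.mp hx with rfl | hx'
  · exact ⟨c', rfl, by omega⟩
  · rw [Finset.mem_singleton] at hx'
    subst hx'
    exact ⟨c, Finset.pair_comm _ _, by omega⟩

lemma stepL (n : ℕ) (hn : 1 ≤ n) {Q} (hQ : IsTiling (Ka (4*n)) Q) {b : ℤ}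
    (hb1 : 2*(n:ℤ) ≤ b) (hb2 : b ≤ 4*(n:ℤ) - 1)
    (hprev : b = 2*(n:ℤ) ∨ Lb n (b-1) ∈ Q) : Lb n b ∈ Q := by
  have e1 : ((b - 4*(n:ℤ), b) : ℤ × ℤ).1 = b - 4*(n:ℤ) := rfl
  have e2 : ((b - 4*(n:ℤ), b) : ℤ × ℤ).2 = b := rfl
  have hxK : ((b - 4*(n:ℤ), b) : ℤ × ℤ) ∈ Ka (4*n) := by
    rw [ka_mem, e1, e2]; omega
  obtain ⟨d, hdQ, hxd⟩ := tiling_cover hQ hxK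
  obtain ⟨y, hdxy, hadj⟩ := domino_cases (hQ.1 d hdQ) hxd
  rw [e1, e2] at hadj
  have hyd : y ∈ d := by rw [hdxy]; simp
  have hyK : y ∈ Ka (4*n) := tiling_subset hQ hdQ hyd
  rw [ka_mem] at hyK
  rcases hadj with ⟨h1, h2⟩ | ⟨h1, h2⟩ | ⟨h1, h2⟩ | ⟨h1, h2⟩
  · -- y is the right neighbor: d = Lb n b
    have hy : y = (b - 4*(n:ℤ) + 1, b) := by
      rw [Prod.ext_iff]; constructor <;> simp only <;> omega
    have hd' : d = Lb n b := by rw [hdxy, hy]; rfl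
    rw [← hd']; exact hdQ
  · -- left neighbor: impossible
    exfalso; omega
  · -- above: impossible
    exfalso; omega
  · -- below
    rcases hprev with rfl | hL
    · exfalso; omega
    · exfalso
      have hyL : y ∈ Lb n (b-1) := by rw [mem_Lb]; omega
      have : d = Lb n (b-1) := tiling_unique hQ hdQ hL hyd hyL
      rw [this, mem_Lb] at hxd
      rw [e1, e2] at hxd   -- reduce projections if needed
      omega

lemma stepR (n : ℕ) (hn : 1 ≤ n) {Q} (hQ : IsTiling (Ka (4*n)) Q) {b : ℤ}
    (hb1 : 2*(n:ℤ) ≤ b) (hb2 : b ≤ 4*(n:ℤ) - 1)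
    (hprev : b = 2*(n:ℤ) ∨ Rb n (b-1) ∈ Q) : Rb n b ∈ Q := by
  have e1 : ((4*(n:ℤ) - 1 - b, b) : ℤ × ℤ).1 = 4*(n:ℤ) - 1 - b := rfl
  have e2 : ((4*(n:ℤ) - 1 - b, b) : ℤ × ℤ).2 = b := rfl
  have hxK : ((4*(n:ℤ) - 1 - b, b) : ℤ × ℤ) ∈ Ka (4*n) := by
    rw [ka_mem, e1, e2]; omega
  obtain ⟨d, hdQ, hxd⟩ := tiling_cover hQ hxK
  obtain ⟨y, hdxy, hadj⟩ := domino_cases (hQ.1 d hdQ) hxd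
  rw [e1, e2] at hadj
  have hyd : y ∈ d := by rw [hdxy]; simp
  have hyK : y ∈ Ka (4*n) := tiling_subset hQ hdQ hyd
  rw [ka_mem] at hyK
  rcases hadj with ⟨h1, h2⟩ | ⟨h1, h2⟩ | ⟨h1, h2⟩ | ⟨h1, h2⟩
  · -- right neighbor: impossible
    exfalso; omega
  · -- y is the left neighbor: d = Rb n b
    have hy : y = (4*(n:ℤ) - 2 - b, b) := by
      rw [Prod.ext_iff]; constructor <;> simp only <;> omega
    have hd' : d = Rb n b := by rw [hdxy, hy]; exact Finset.pair_comm _ _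
    rw [← hd']; exact hdQ
  · -- above: impossible
    exfalso; omega
  · -- below
    rcases hprev with rfl | hR
    · exfalso; omega
    · exfalso
      have hyR : y ∈ Rb n (b-1) := by rw [mem_Rb]; omega
      have : d = Rb n (b-1) := tiling_unique hQ hdQ hR hyd hyR
      rw [this, mem_Rb] at hxd
      rw [e1, e2] at hxd
      omega

lemma forced (n : ℕ) (hn : 1 ≤ n) {Q} (hQ : IsTiling (Ka (4*n)) Q) :
    ∀ t : ℕ, (t:ℤ) ≤ 2*(n:ℤ) - 1 → Lb n (2*(n:ℤ) + t) ∈ Q ∧ Rb n (2*(n:ℤ) + t) ∈ Q := by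
  intro t
  induction t with
  | zero =>
    intro _
    exact ⟨stepL n hn hQ (by omega) (by omega) (Or.inl (by push_cast; ring)),
           stepR n hn hQ (by omega) (by omega) (Or.inl (by push_cast; ring))⟩
  | succ t ih =>
    intro ht
    have ih' := ih (by push_cast at ht ⊢; omega)
    have h1 : (2*(n:ℤ) + ((t+1 : ℕ):ℤ)) - 1 = 2*(n:ℤ) + (t:ℤ) := by push_cast; ring
    refine ⟨stepL n hn hQ (by omega) (by push_cast at ht ⊢; omega) (Or.inr ?_),
            stepR n hn hQ (by omega) (by push_cast at ht ⊢; omega) (Or.inr ?_)⟩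
    · rw [h1]; exact ih'.1
    · rw [h1]; exact ih'.2

lemma Fn_subset (n : ℕ) (hn : 1 ≤ n) {Q} (hQ : IsTiling (Ka (4*n)) Q) : Fn n ⊆ Q := by
  rintro d ⟨b, hb1, hb2, hcase⟩
  have ht := forced n hn hQ (b - 2*(n:ℤ)).toNat (by omega)
  have hb : 2*(n:ℤ) + ((b - 2*(n:ℤ)).toNat : ℤ) = b := by omega
  rw [hb] at ht
  rcases hcase with rfl | rfl
  exacts [ht.1, ht.2]

lemma Ka_subset (n : ℕ) (hn : 1 ≤ n) : Ka (4*n-2) ⊆ Ka (4*n) := by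
  intro c hc
  rw [ka_mem] at hc ⊢
  omega

lemma small_to_big (n : ℕ) (hn : 1 ≤ n) {P} (hP : IsTiling (Ka (4*n-2)) P) :
    IsTiling (Ka (4*n)) (P ∪ Fn n) := by
  have hPcell : ∀ d ∈ P, ∀ x ∈ d, x ∈ Ka (4*n-2) := fun d hd x hx => tiling_subset hP hd hx
  refine ⟨?_, ?_, ?_⟩
  · rintro d (hd | ⟨b, _, _, (rfl | rfl)⟩)
    exacts [hP.1 d hd, Lb_domino n b, Rb_domino n b]
  · rintro d (hd | hdF) d' (hd' | hdF') hne
    · exact hP.2.1 hd hd' hne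
    · exact Finset.disjoint_left.mpr fun {x} hx hxx =>
        ((mem_Fn_cells n hn x).mp ⟨d', hdF', hxx⟩).2 (hPcell d hd x hx)
    · exact Finset.disjoint_left.mpr fun {x} hx hxx =>
        ((mem_Fn_cells n hn x).mp ⟨d, hdF, hx⟩).2 (hPcell d' hd' x hxx)
    · by_contra h
      obtain ⟨x, hx, hx'⟩ := Finset.not_disjoint_iff.mp h
      exact hne (Fn_inter hdF hdF' hx hx')
  · ext x
    simp only [Set.mem_iUnion, exists_prop]
    constructor
    · rintro ⟨d, (hd | hdF), hx⟩
      · exact Ka_subset n hn (hPcell d hd x hx)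
      · exact ((mem_Fn_cells n hn x).mp ⟨d, hdF, hx⟩).1
    · intro hx
      by_cases hxs : x ∈ Ka (4*n-2)
      · obtain ⟨d, hd, hxd⟩ := tiling_cover hP hxs
        exact ⟨d, Or.inl hd, hxd⟩
      · obtain ⟨d, hdF, hxd⟩ := (mem_Fn_cells n hn x).mpr ⟨hx, hxs⟩
        exact ⟨d, Or.inr hdF, hxd⟩

lemma big_to_small (n : ℕ) (hn : 1 ≤ n) {Q} (hQ : IsTiling (Ka (4*n)) Q) :
    IsTiling (Ka (4*n-2)) (Q \ Fn n) := by
  have hF : Fn n ⊆ Q := Fn_subset n hn hQ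
  refine ⟨fun d hd => hQ.1 d hd.1, hQ.2.1.subset Set.diff_subset, ?_⟩
  ext x
  simp only [Set.mem_iUnion, exists_prop]
  constructor
  · rintro ⟨d, ⟨hdQ, hdF⟩, hx⟩
    have hxK : x ∈ Ka (4*n) := tiling_subset hQ hdQ hx
    by_contra hxs
    obtain ⟨f, hfF, hxf⟩ := (mem_Fn_cells n hn x).mpr ⟨hxK, hxs⟩
    exact hdF (by rw [tiling_unique hQ hdQ (hF hfF) hx hxf]; exact hfF)
  · intro hx
    obtain ⟨d, hdQ, hxd⟩ := tiling_cover hQ (Ka_subset n hn hx)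
    refine ⟨d, ⟨hdQ, fun hdF => ?_⟩, hxd⟩
    exact ((mem_Fn_cells n hn x).mp ⟨d, hdF, hxd⟩).2 hx

lemma recover (n : ℕ) (hn : 1 ≤ n) {P} (hP : IsTiling (Ka (4*n-2)) P) :
    (P ∪ Fn n) \ Fn n = P := by
  have hnot : ∀ d ∈ P, d ∉ Fn n := by
    intro d hd hdF
    obtain ⟨c, c2, _, hd2⟩ := hP.1 d hd
    have hc : c ∈ d := by rw [hd2]; simp
    exact ((mem_Fn_cells n hn c).mp ⟨d, hdF, hc⟩).2 (tiling_subset hP hd hc)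
  ext d
  simp only [Set.mem_diff, Set.mem_union]
  constructor
  · rintro ⟨hd | hdF, hnF⟩
    exacts [hd, absurd hdF hnF]
  · intro hd
    exact ⟨Or.inl hd, hnot d hd⟩

/-- `T(K_a(4n-2)) = T(K_a(4n))`. -/
theorem abutting_forced_even (n : ℕ) (hn : 1 ≤ n) :
    numTilings (Ka (4 * n - 2)) = numTilings (Ka (4 * n)) := by
  classical
  unfold numTilings
  have hinj : Set.InjOn (fun P => P ∪ Fn n) {P | IsTiling (Ka (4*n-2)) P} := by
    intro P1 h1 P2 h2 he
    simp only at he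
    rw [← recover n hn h1, he, recover n hn h2]
  have himg : (fun P => P ∪ Fn n) '' {P | IsTiling (Ka (4*n-2)) P} =
      {Q | IsTiling (Ka (4*n)) Q} := by
    apply Set.Subset.antisymm
    · rintro Q ⟨P, hP, rfl⟩
      exact small_to_big n hn hP
    · intro Q hQ
      refine ⟨Q \ Fn n, big_to_small n hn hQ, ?_⟩
      exact Set.diff_union_of_subset (Fn_subset n hn hQ)
  rw [← himg, Set.ncard_image_of_injOn hinj]
end

section
/- For every natural number n ≥ 1, T(K_a(4n−1)) = T(K_a(4n+1)). -/
open Finset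

/-!
Every tiling of `K_a(4n+1)` contains the same dominoes along the upper rim: the rim cells outside
`K_a(4n-1)` form two staircases, and starting from the lowest cell of each staircase every rim
cell has exactly one neighbour that is not yet covered. Removing these forced dominoes is therefore
a bijection onto the tilings of `K_a(4n-1)`.
-/

def Adjacent (c c' : ℤ × ℤ) : Prop :=
  |c.1 - c'.1| + |c.2 - c'.2| = 1

theorem adjacent_iff {c c' : ℤ × ℤ} :
    Adjacent c c' ↔ (c.1 - c'.1).natAbs + (c.2 - c'.2).natAbs = 1 := by
  simp only [Adjacent, Int.abs_eq_natAbs]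
  omega

theorem Adjacent.symm {c c' : ℤ × ℤ} (h : Adjacent c c') : Adjacent c' c := by
  rw [adjacent_iff] at h ⊢
  omega

theorem Adjacent.ne {c c' : ℤ × ℤ} (h : Adjacent c c') : c ≠ c' := by
  rintro rfl
  simp [Adjacent] at h

theorem IsDomino.nonempty {d : Finset (ℤ × ℤ)} (hd : IsDomino d) : d.Nonempty := by
  obtain ⟨c, c', -, rfl⟩ := hd
  exact insert_nonempty c {c'}

theorem IsDomino.exists_eq_pair_of_mem {d : Finset (ℤ × ℤ)} (hd : IsDomino d) {c : ℤ × ℤ}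
    (hc : c ∈ d) : ∃ q, Adjacent c q ∧ d = {c, q} := by
  obtain ⟨u, v, huv, rfl⟩ := hd
  rcases mem_insert.1 hc with rfl | hcv
  · exact ⟨v, huv, rfl⟩
  · rw [mem_singleton.1 hcv]
    exact ⟨u, Adjacent.symm huv, pair_comm u v⟩

namespace IsTiling

variable {R S : Set (ℤ × ℤ)} {P Q : Set (Finset (ℤ × ℤ))}

theorem isDomino (hP : IsTiling R P) {d : Finset (ℤ × ℤ)} (hd : d ∈ P) : IsDomino d :=
  hP.1 d hd

theorem mem_of_mem (hP : IsTiling R P) {d : Finset (ℤ × ℤ)} (hd : d ∈ P) {c : ℤ × ℤ}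
    (hc : c ∈ d) : c ∈ R :=
  hP.2.2 ▸ Set.mem_biUnion hd hc

theorem exists_mem_of_mem (hP : IsTiling R P) {c : ℤ × ℤ} (hc : c ∈ R) : ∃ d ∈ P, c ∈ d := by
  rw [← hP.2.2] at hc
  simpa using hc

theorem eq_of_mem_of_mem (hP : IsTiling R P) {d e : Finset (ℤ × ℤ)} (hd : d ∈ P) (he : e ∈ P)
    {c : ℤ × ℤ} (hcd : c ∈ d) (hce : c ∈ e) : d = e :=
  hP.2.1.elim_finset hd he c hcd hce

theorem disjoint (hP : IsTiling R P) (hQ : IsTiling S Q) (hRS : Disjoint R S) : Disjoint P Q := by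
  refine Set.disjoint_left.2 fun d hdP hdQ => ?_
  obtain ⟨c, hc⟩ := (hP.isDomino hdP).nonempty
  exact Set.disjoint_left.1 hRS (hP.mem_of_mem hdP hc) (hQ.mem_of_mem hdQ hc)

theorem union (hP : IsTiling R P) (hQ : IsTiling S Q) (hRS : Disjoint R S) :
    IsTiling (R ∪ S) (P ∪ Q) := by
  refine ⟨fun d hd => hd.elim hP.isDomino hQ.isDomino, ?_, by
    rw [Set.biUnion_union, hP.2.2, hQ.2.2]⟩
  refine Set.pairwiseDisjoint_union.2 ⟨hP.2.1, hQ.2.1, fun d hd e he _ => ?_⟩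
  exact disjoint_left.2 fun c hcd hce =>
    Set.disjoint_left.1 hRS (hP.mem_of_mem hd hcd) (hQ.mem_of_mem he hce)

theorem diff (hP : IsTiling R P) (hQ : IsTiling S Q) (hQP : Q ⊆ P) :
    IsTiling (R \ S) (P \ Q) := by
  refine ⟨fun d hd => hP.isDomino hd.1, hP.2.1.subset Set.sdiff_subset, ?_⟩
  ext c
  simp only [Set.mem_iUnion, mem_coe, exists_prop, Set.mem_sdiff]
  constructor
  · rintro ⟨d, ⟨hdP, hdQ⟩, hcd⟩
    refine ⟨hP.mem_of_mem hdP hcd, fun hcS => hdQ ?_⟩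
    obtain ⟨e, heQ, hce⟩ := hQ.exists_mem_of_mem hcS
    rwa [hP.eq_of_mem_of_mem hdP (hQP heQ) hcd hce]
  · rintro ⟨hcR, hcS⟩
    obtain ⟨d, hdP, hcd⟩ := hP.exists_mem_of_mem hcR
    exact ⟨d, ⟨hdP, fun hdQ => hcS (hQ.mem_of_mem hdQ hcd)⟩, hcd⟩

end IsTiling

theorem numTilings_eq_of_forced {R S : Set (ℤ × ℤ)} {D : Set (Finset (ℤ × ℤ))} (hSR : S ⊆ R)
    (hD : IsTiling (R \ S) D) (hforced : ∀ P, IsTiling R P → D ⊆ P) :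
    numTilings S = numTilings R := by
  have hdisj : ∀ P, IsTiling S P → Disjoint P D := fun P hP =>
    hP.disjoint hD Set.disjoint_sdiff_right
  have himage : (· ∪ D) '' {P | IsTiling S P} = {P | IsTiling R P} := by
    ext Q
    refine ⟨?_, fun hQ => ⟨Q \ D, ?_, Set.sdiff_union_of_subset (hforced Q hQ)⟩⟩
    · rintro ⟨P, hP, rfl⟩
      simpa only [Set.mem_ofPred_eq, Set.union_sdiff_cancel hSR] using
        hP.union hD Set.disjoint_sdiff_right
    · simpa only [Set.mem_ofPred_eq, Set.sdiff_sdiff_cancel_left hSR] using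
        hQ.diff hD (hforced Q hQ)
  have hinj : Set.InjOn (· ∪ D) {P | IsTiling S P} := fun P hP P' hP' h => by
    rw [← (hdisj P hP).sdiff_eq_left, ← (hdisj P' hP').sdiff_eq_left,
      ← Set.union_sdiff_right, ← Set.union_sdiff_right (s := P')]
    exact congrArg (· \ D) (h : P ∪ D = P' ∪ D)
  rw [numTilings, numTilings, ← himage, hinj.ncard_image]

def chainDominoes (c p : ℕ → ℤ × ℤ) (m : ℕ) : Set (Finset (ℤ × ℤ)) :=
  {d | ∃ j < m, d = {c j, p j}}

/-- Once the dominoes before `j` are placed, `p j` is the only neighbour left to pair `c j` with. -/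
theorem IsTiling.chainDominoes_subset {R : Set (ℤ × ℤ)} {P : Set (Finset (ℤ × ℤ))}
    (hP : IsTiling R P) {c p : ℕ → ℤ × ℤ} {m : ℕ} (hc : ∀ j < m, c j ∈ R)
    (hforced : ∀ j < m, ∀ q ∈ R, Adjacent (c j) q → q = p j ∨ ∃ i < j, q = p i ∧ c i ≠ c j) :
    chainDominoes c p m ⊆ P := by
  suffices h : ∀ j < m, ({c j, p j} : Finset (ℤ × ℤ)) ∈ P by
    rintro d ⟨j, hj, rfl⟩
    exact h j hj
  intro j
  induction j using Nat.strong_induction_on with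
  | _ j ih =>
    intro hj
    obtain ⟨d, hdP, hcd⟩ := hP.exists_mem_of_mem (hc j hj)
    obtain ⟨q, hcq, rfl⟩ := (hP.isDomino hdP).exists_eq_pair_of_mem hcd
    rcases hforced j hj q (hP.mem_of_mem hdP (by simp)) hcq with rfl | ⟨i, hij, rfl, hci⟩
    · exact hdP
    · have hd : {c j, p i} = ({c i, p i} : Finset (ℤ × ℤ)) :=
        hP.eq_of_mem_of_mem hdP (ih i hij (hij.trans hj)) (c := p i) (by simp) (by simp)
      have hcj : c j ∈ ({c i, p i} : Finset (ℤ × ℤ)) := hd ▸ mem_insert_self _ _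
      rcases mem_insert.1 hcj with h | h
      · exact absurd h.symm hci
      · exact absurd (mem_singleton.1 h) hcq.ne

theorem mem_Ka {m : ℕ} {c : ℤ × ℤ} :
    c ∈ Ka m ↔ (2 * c.1 + 1).natAbs + (2 * c.2 + 1).natAbs ≤ 2 * m ∧
      2 * ((c.1 + 1) / 2) ≤ c.2 ∧ -2 * ((c.1 + 1) / 2) ≤ c.2 := by
  simp only [Ka, AD, Set.mem_ofPred_eq, Int.fdiv_eq_ediv_of_nonneg _ zero_le_two,
    Int.abs_eq_natAbs]
  omega

theorem Ka_subset_Ka {m m' : ℕ} (h : m ≤ m') : Ka m ⊆ Ka m' := by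
  intro c hc
  rw [mem_Ka] at hc ⊢
  omega

/-- The cells of `K_a(4n+1)` outside `K_a(4n-1)` form two staircases; these are their tilings by
horizontal dominoes, the `j`-th domino of each staircase lying in row `2n + j`. -/
def rimDominoes (n : ℕ) : Set (Finset (ℤ × ℤ)) :=
  chainDominoes (fun j => (2 * n - j, 2 * n + j)) (fun j => (2 * n - j - 1, 2 * n + j))
      (2 * n + 1) ∪
    chainDominoes (fun j => (j - 2 * n - 1, 2 * n + j)) (fun j => (j - 2 * n, 2 * n + j)) (2 * n)

theorem rimDominoes_subset {n : ℕ} {P : Set (Finset (ℤ × ℤ))} (hP : IsTiling (Ka (4 * n + 1)) P) :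
    rimDominoes n ⊆ P := by
  refine Set.union_subset (hP.chainDominoes_subset ?_ ?_) (hP.chainDominoes_subset ?_ ?_) <;>
    intro j hj
  · rw [mem_Ka]; omega
  · rintro ⟨x, y⟩ hq hadj
    rw [mem_Ka] at hq
    rw [adjacent_iff] at hadj
    obtain ⟨rfl, rfl⟩ | ⟨hj0, rfl, rfl⟩ :
        (x = 2 * n - j - 1 ∧ y = 2 * n + j) ∨ (0 < j ∧ x = 2 * n - j ∧ y = 2 * n + j - 1) := by
      simp only at hq hadj
      omega
    · exact Or.inl rfl
    · refine Or.inr ⟨j - 1, by omega, ?_, ?_⟩ <;> simp only [ne_eq, Prod.ext_iff] <;> omega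
  · rw [mem_Ka]; omega
  · rintro ⟨x, y⟩ hq hadj
    rw [mem_Ka] at hq
    rw [adjacent_iff] at hadj
    obtain ⟨rfl, rfl⟩ | ⟨hj0, rfl, rfl⟩ :
        (x = j - 2 * n ∧ y = 2 * n + j) ∨ (0 < j ∧ x = j - 2 * n - 1 ∧ y = 2 * n + j - 1) := by
      simp only at hq hadj
      omega
    · exact Or.inl rfl
    · refine Or.inr ⟨j - 1, by omega, ?_, ?_⟩ <;> simp only [ne_eq, Prod.ext_iff] <;> omega

theorem isTiling_rimDominoes (n : ℕ) :
    IsTiling (Ka (4 * n + 1) \ Ka (4 * n - 1)) (rimDominoes n) := by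
  refine ⟨?_, ?_, ?_⟩
  · rintro d (⟨j, hj, rfl⟩ | ⟨j, hj, rfl⟩) <;> exact ⟨_, _, adjacent_iff.2 (by simp), rfl⟩
  · rintro d hd e he hne
    refine disjoint_left.2 fun ⟨x, y⟩ hcd hce => hne ?_
    rcases hd with ⟨j, hj, rfl⟩ | ⟨j, hj, rfl⟩ <;> rcases he with ⟨i, hi, rfl⟩ | ⟨i, hi, rfl⟩ <;>
      simp only [id, mem_insert, mem_singleton, Prod.ext_iff] at hcd hce <;>
      first | omega | (obtain rfl : i = j := (by omega); rfl)
  · ext ⟨x, y⟩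
    simp only [rimDominoes, chainDominoes, Set.mem_iUnion, mem_coe, exists_prop, Set.mem_sdiff,
      Set.mem_union, Set.mem_ofPred_eq, mem_Ka]
    constructor
    · rintro ⟨d, ⟨j, hj, rfl⟩ | ⟨j, hj, rfl⟩, hc⟩ <;>
        simp only [mem_insert, mem_singleton, Prod.ext_iff] at hc <;> omega
    · rintro ⟨hin, hout⟩
      by_cases hright : 4 * (n : ℤ) - 1 ≤ x + y
      · refine ⟨_, Or.inl ⟨(y - 2 * n).toNat, by omega, rfl⟩, ?_⟩
        simp only [mem_insert, mem_singleton, Prod.ext_iff]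
        omega
      · refine ⟨_, Or.inr ⟨(y - 2 * n).toNat, by omega, rfl⟩, ?_⟩
        simp only [mem_insert, mem_singleton, Prod.ext_iff]
        omega

theorem abutting_forced_odd_general (n : ℕ) :
    numTilings (Ka (4 * n - 1)) = numTilings (Ka (4 * n + 1)) :=
  numTilings_eq_of_forced (Ka_subset_Ka (by omega)) (isTiling_rimDominoes n)
    fun _ => rimDominoes_subset

/-- `T(K_a(4n-1)) = T(K_a(4n+1))`. -/
theorem abutting_forced_odd (n : ℕ) (hn : 1 ≤ n) :
    numTilings (Ka (4 * n - 1)) = numTilings (Ka (4 * n + 1)) :=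
  abutting_forced_odd_general n
end

section
/- For every natural number n ≥ 1, T(K_na(4n)) = T(K_na(4n+2)). -/
open Finset

/-! ### Auxiliary lemmas -/

lemma mem_Kna_iff (N : ℕ) (a b : ℤ) :
    ((a, b) : ℤ × ℤ) ∈ Kna N ↔
      |2 * a + 1| + |2 * b + 1| ≤ 2 * (N : ℤ) ∧ -2 * ((a + 1) / 2) ≤ b ∧
        b ≤ 2 * ((a + 1) / 2) - 1 := by
  simp only [Kna, AD, Set.mem_setOf_eq, Int.fdiv_eq_ediv_of_nonneg _ (by norm_num : (0:ℤ) ≤ 2)]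

lemma adj_cases {c c' : ℤ × ℤ} (h : |c.1 - c'.1| + |c.2 - c'.2| = 1) :
    c' = (c.1 + 1, c.2) ∨ c' = (c.1 - 1, c.2) ∨ c' = (c.1, c.2 + 1) ∨ c' = (c.1, c.2 - 1) := by
  obtain ⟨a, b⟩ := c; obtain ⟨a', b'⟩ := c'
  simp only [Prod.mk.injEq] at *
  rcases abs_cases (a - a') with ⟨e1, s1⟩ | ⟨e1, s1⟩ <;>
    rcases abs_cases (b - b') with ⟨e2, s2⟩ | ⟨e2, s2⟩ <;> omega

/-- If every neighbour of `c` other than `c₀` is either outside the region or covered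
by a tile not containing `c`, then `{c, c₀}` is a tile of the tiling. -/
lemma forced_s11 {R : Set (ℤ × ℤ)} {P : Set (Finset (ℤ × ℤ))} (hP : IsTiling R P)
    (c c₀ : ℤ × ℤ) (hc : c ∈ R) (_hadj : |c.1 - c₀.1| + |c.2 - c₀.2| = 1)
    (hothers : ∀ c', |c.1 - c'.1| + |c.2 - c'.2| = 1 → c' ≠ c₀ → c' ∈ R →
      ∃ e ∈ P, c' ∈ e ∧ c ∉ e) :
    ({c, c₀} : Finset (ℤ × ℤ)) ∈ P := by
  obtain ⟨hdom, hdisj, hun⟩ := hP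
  have hcU : c ∈ ⋃ d ∈ P, (d : Set (ℤ × ℤ)) := hun ▸ hc
  rw [Set.mem_iUnion₂] at hcU
  obtain ⟨d, hd, hcd⟩ := hcU
  obtain ⟨x, y, hxy, hdxy⟩ := hdom d hd
  have hsub : (d : Set (ℤ × ℤ)) ⊆ R := by
    rw [← hun]; exact Set.subset_biUnion_of_mem hd
  -- write d = {c, c'} with c' adjacent to c
  have hcmem : c = x ∨ c = y := by
    rw [hdxy] at hcd; simpa using hcd
  obtain ⟨c', hadj', hd'⟩ : ∃ c', (|c.1 - c'.1| + |c.2 - c'.2| = 1) ∧ d = {c, c'} := by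
    rcases hcmem with h | h
    · exact ⟨y, h ▸ hxy, h ▸ hdxy⟩
    · refine ⟨x, ?_, by rw [hdxy, Finset.pair_comm, h]⟩
      rw [abs_sub_comm x.1 y.1, abs_sub_comm x.2 y.2] at hxy
      rw [h]; exact hxy
  have hc'd : c' ∈ d := by rw [hd']; simp
  have hc'R : c' ∈ R := hsub hc'd
  by_cases hcc : c' = c₀
  · rw [← hcc, ← hd']; exact hd
  · obtain ⟨e, he, hc'e, hce⟩ := hothers c' hadj' hcc hc'R
    have hde : d ≠ e := fun h => hce (h ▸ hcd)
    have := hdisj hd he hde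
    exact absurd hc'e (Finset.disjoint_left.mp this hc'd)
/-! ### The forced ring dominoes -/

def topD (n : ℕ) (a : ℤ) : Finset (ℤ × ℤ) := {(a, 4*n+1-a), (a, 4*n-a)}
def botD (n : ℕ) (a : ℤ) : Finset (ℤ × ℤ) := {(a, a-4*n-1), (a, a-4*n-2)}

def Fset (n : ℕ) : Set (Finset (ℤ × ℤ)) :=
  topD n '' Set.Icc (2*(n:ℤ)+1) (4*n+1) ∪ botD n '' Set.Icc (2*(n:ℤ)+1) (4*n)

section geom
variable (n : ℕ)

lemma out_up {a b : ℤ} (hb : 0 ≤ b) (hs : 4*(n:ℤ)+2 ≤ a + b) : ((a, b) : ℤ×ℤ) ∉ Kna (4*n+2) := by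
  rw [mem_Kna_iff]
  rintro ⟨h1, h2, h3⟩
  rcases abs_cases (2*a+1) with ⟨e1, s1⟩ | ⟨e1, s1⟩ <;>
    rcases abs_cases (2*b+1) with ⟨e2, s2⟩ | ⟨e2, s2⟩ <;> rw [e1, e2] at h1 <;> omega

lemma out_down {a b : ℤ} (hb : b ≤ -1) (hs : 4*(n:ℤ)+3 ≤ a - b) : ((a, b) : ℤ×ℤ) ∉ Kna (4*n+2) := by
  rw [mem_Kna_iff]
  rintro ⟨h1, h2, h3⟩
  rcases abs_cases (2*a+1) with ⟨e1, s1⟩ | ⟨e1, s1⟩ <;>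
    rcases abs_cases (2*b+1) with ⟨e2, s2⟩ | ⟨e2, s2⟩ <;> rw [e1, e2] at h1 <;> omega

lemma out_corner_top : ((2*(n:ℤ), 2*(n:ℤ)) : ℤ×ℤ) ∉ Kna (4*n+2) := by
  rw [mem_Kna_iff]; rintro ⟨h1, h2, h3⟩; omega

lemma out_corner_bot : ((2*(n:ℤ), -(2*(n:ℤ))-1) : ℤ×ℤ) ∉ Kna (4*n+2) := by
  rw [mem_Kna_iff]; rintro ⟨h1, h2, h3⟩; omega

lemma mem_top1 {a : ℤ} (h1 : 2*(n:ℤ)+1 ≤ a) (h2 : a ≤ 4*n+1) :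
    ((a, 4*(n:ℤ)+1-a) : ℤ×ℤ) ∈ Kna (4*n+2) := by
  rw [mem_Kna_iff]
  rcases abs_cases (2*a+1) with ⟨e1, s1⟩ | ⟨e1, s1⟩ <;>
    rcases abs_cases (2*(4*(n:ℤ)+1-a)+1) with ⟨e2, s2⟩ | ⟨e2, s2⟩ <;> rw [e1, e2] <;> omega

lemma mem_top2 {a : ℤ} (h1 : 2*(n:ℤ)+1 ≤ a) (h2 : a ≤ 4*n+1) :
    ((a, 4*(n:ℤ)-a) : ℤ×ℤ) ∈ Kna (4*n+2) := by
  rw [mem_Kna_iff]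
  rcases abs_cases (2*a+1) with ⟨e1, s1⟩ | ⟨e1, s1⟩ <;>
    rcases abs_cases (2*(4*(n:ℤ)-a)+1) with ⟨e2, s2⟩ | ⟨e2, s2⟩ <;> rw [e1, e2] <;> omega

lemma mem_bot1 {a : ℤ} (h1 : 2*(n:ℤ)+1 ≤ a) (h2 : a ≤ 4*n) :
    ((a, a-4*(n:ℤ)-1) : ℤ×ℤ) ∈ Kna (4*n+2) := by
  rw [mem_Kna_iff]
  rcases abs_cases (2*a+1) with ⟨e1, s1⟩ | ⟨e1, s1⟩ <;>
    rcases abs_cases (2*(a-4*(n:ℤ)-1)+1) with ⟨e2, s2⟩ | ⟨e2, s2⟩ <;> rw [e1, e2] <;> omega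

lemma mem_bot2 {a : ℤ} (h1 : 2*(n:ℤ)+1 ≤ a) (h2 : a ≤ 4*n) :
    ((a, a-4*(n:ℤ)-2) : ℤ×ℤ) ∈ Kna (4*n+2) := by
  rw [mem_Kna_iff]
  rcases abs_cases (2*a+1) with ⟨e1, s1⟩ | ⟨e1, s1⟩ <;>
    rcases abs_cases (2*(a-4*(n:ℤ)-2)+1) with ⟨e2, s2⟩ | ⟨e2, s2⟩ <;> rw [e1, e2] <;> omega

/-- Cells of the forced dominoes are not in `Kna (4n)`. -/
lemma Fset_cells_out {f : Finset (ℤ × ℤ)} (hf : f ∈ Fset n) {y : ℤ × ℤ} (hy : y ∈ f) :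
    y ∉ Kna (4*n) := by
  obtain ⟨b1, b2⟩ := y
  rw [mem_Kna_iff]
  rintro ⟨h1, h2, h3⟩
  rcases hf with ⟨a, ⟨ha1, ha2⟩, rfl⟩ | ⟨a, ⟨ha1, ha2⟩, rfl⟩ <;>
    simp only [topD, botD, Finset.mem_insert, Finset.mem_singleton, Prod.mk.injEq] at hy <;>
    rcases abs_cases (2*b1+1) with ⟨e1, s1⟩ | ⟨e1, s1⟩ <;>
    rcases abs_cases (2*b2+1) with ⟨e2, s2⟩ | ⟨e2, s2⟩ <;> rw [e1, e2] at h1 <;> omega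

/-- Cells of the forced dominoes are in `Kna (4n+2)`. -/
lemma Fset_cells_in {f : Finset (ℤ × ℤ)} (hf : f ∈ Fset n) {y : ℤ × ℤ} (hy : y ∈ f) :
    y ∈ Kna (4*n+2) := by
  rcases hf with ⟨a, ⟨ha1, ha2⟩, rfl⟩ | ⟨a, ⟨ha1, ha2⟩, rfl⟩ <;>
    simp only [topD, botD, Finset.mem_insert, Finset.mem_singleton] at hy
  · rcases hy with rfl | rfl
    · exact mem_top1 n ha1 ha2
    · exact mem_top2 n ha1 ha2
  · rcases hy with rfl | rfl
    · exact mem_bot1 n ha1 ha2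
    · exact mem_bot2 n ha1 ha2

/-- Any ring cell is covered by a forced domino. -/
lemma ring_cover {a b : ℤ} (h2 : ((a, b) : ℤ×ℤ) ∈ Kna (4*n+2)) (h1 : ((a, b) : ℤ×ℤ) ∉ Kna (4*n)) :
    ∃ f ∈ Fset n, ((a, b) : ℤ×ℤ) ∈ f := by
  rw [mem_Kna_iff] at h1 h2
  obtain ⟨h2a, h2b, h2c⟩ := h2
  have h1' : ¬ (|2*a+1| + |2*b+1| ≤ 2*((4*n : ℕ) : ℤ)) := fun h => h1 ⟨h, h2b, h2c⟩
  have key : (2*(n:ℤ)+1 ≤ a ∧ a ≤ 4*n+1 ∧ (b = 4*(n:ℤ)+1-a ∨ b = 4*(n:ℤ)-a)) ∨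
      (2*(n:ℤ)+1 ≤ a ∧ a ≤ 4*n ∧ (b = a-4*(n:ℤ)-1 ∨ b = a-4*(n:ℤ)-2)) := by
    rcases abs_cases (2*a+1) with ⟨e1, s1⟩ | ⟨e1, s1⟩ <;>
      rcases abs_cases (2*b+1) with ⟨e2, s2⟩ | ⟨e2, s2⟩ <;> rw [e1, e2] at h2a h1' <;> omega
  rcases key with ⟨k1, k2, k3⟩ | ⟨k1, k2, k3⟩
  · exact ⟨topD n a, Or.inl ⟨a, ⟨k1, k2⟩, rfl⟩, by
      simp only [topD, Finset.mem_insert, Finset.mem_singleton, Prod.mk.injEq, eq_self_iff_true, true_and]; omega⟩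
  · exact ⟨botD n a, Or.inr ⟨a, ⟨k1, k2⟩, rfl⟩, by
      simp only [botD, Finset.mem_insert, Finset.mem_singleton, Prod.mk.injEq, eq_self_iff_true, true_and]; omega⟩

lemma Kna_mono : Kna (4*n) ⊆ Kna (4*n+2) := by
  rintro ⟨a, b⟩ h
  rw [mem_Kna_iff] at h ⊢
  refine ⟨le_trans h.1 ?_, h.2.1, h.2.2⟩
  push_cast; omega

end geom
/-! ### Forcing -/

lemma adj_cases' {x y x' y' : ℤ} (h : |x - x'| + |y - y'| = 1) :
    (x' = x + 1 ∧ y' = y) ∨ (x' = x - 1 ∧ y' = y) ∨ (x' = x ∧ y' = y + 1) ∨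
      (x' = x ∧ y' = y - 1) := by
  rcases abs_cases (x - x') with ⟨e1, s1⟩ | ⟨e1, s1⟩ <;>
    rcases abs_cases (y - y') with ⟨e2, s2⟩ | ⟨e2, s2⟩ <;> omega

section chain
variable {n : ℕ} {P : Set (Finset (ℤ × ℤ))}

lemma top_step (hP : IsTiling (Kna (4*n+2)) P) {a : ℤ} (h1 : 2*(n:ℤ)+1 ≤ a) (h2 : a ≤ 4*n+1)
    (hleft : a = 2*(n:ℤ)+1 ∨ topD n (a-1) ∈ P) : topD n a ∈ P := by
  refine forced_s11 hP (a, 4*(n:ℤ)+1-a) (a, 4*(n:ℤ)-a) (mem_top1 n h1 h2) ?_ ?_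
  · show |a - a| + |(4*(n:ℤ)+1-a) - (4*(n:ℤ)-a)| = 1
    rw [show a - a = 0 by ring, show (4*(n:ℤ)+1-a) - (4*(n:ℤ)-a) = 1 by ring]
    simp
  · rintro ⟨a', b'⟩ hadj hne hR
    dsimp only at hadj
    rcases adj_cases' hadj with ⟨ea, eb⟩ | ⟨ea, eb⟩ | ⟨ea, eb⟩ | ⟨ea, eb⟩
    · subst ea; subst eb
      refine absurd hR (out_up n ?_ ?_) <;> omega
    · subst ea; subst eb
      rcases hleft with hbase | hprev
      · refine absurd hR ?_
        rw [show ((a - 1, 4*(n:ℤ)+1-a) : ℤ × ℤ) = (2*(n:ℤ), 2*(n:ℤ)) by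
          rw [Prod.mk.injEq]; omega]
        exact out_corner_top n
      · refine ⟨topD n (a-1), hprev, ?_, ?_⟩ <;>
          simp only [topD, Finset.mem_insert, Finset.mem_singleton, Prod.mk.injEq,
            eq_self_iff_true, true_and, and_true] <;> omega
    · subst ea; subst eb
      refine absurd hR (out_up n ?_ ?_) <;> omega
    · exact absurd (by rw [Prod.mk.injEq]; omega) hne

lemma bot_step (hP : IsTiling (Kna (4*n+2)) P) {a : ℤ} (h1 : 2*(n:ℤ)+1 ≤ a) (h2 : a ≤ 4*n)
    (hleft : a = 2*(n:ℤ)+1 ∨ botD n (a-1) ∈ P) : botD n a ∈ P := by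
  rw [show botD n a = {(a, a-4*(n:ℤ)-2), (a, a-4*(n:ℤ)-1)} from Finset.pair_comm _ _]
  refine forced_s11 hP (a, a-4*(n:ℤ)-2) (a, a-4*(n:ℤ)-1) (mem_bot2 n h1 h2) ?_ ?_
  · show |a - a| + |(a-4*(n:ℤ)-2) - (a-4*(n:ℤ)-1)| = 1
    rw [show a - a = 0 by ring, show (a-4*(n:ℤ)-2) - (a-4*(n:ℤ)-1) = -1 by ring]
    norm_num
  · rintro ⟨a', b'⟩ hadj hne hR
    dsimp only at hadj
    rcases adj_cases' hadj with ⟨ea, eb⟩ | ⟨ea, eb⟩ | ⟨ea, eb⟩ | ⟨ea, eb⟩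
    · subst ea; subst eb
      refine absurd hR (out_down n ?_ ?_) <;> omega
    · subst ea; subst eb
      rcases hleft with hbase | hprev
      · refine absurd hR ?_
        rw [show ((a - 1, a-4*(n:ℤ)-2) : ℤ × ℤ) = (2*(n:ℤ), -(2*(n:ℤ))-1) by
          rw [Prod.mk.injEq]; omega]
        exact out_corner_bot n
      · refine ⟨botD n (a-1), hprev, ?_, ?_⟩ <;>
          simp only [botD, Finset.mem_insert, Finset.mem_singleton, Prod.mk.injEq,
            eq_self_iff_true, true_and, and_true] <;> omega
    · exact absurd (by rw [Prod.mk.injEq]; omega) hne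
    · subst ea; subst eb
      refine absurd hR (out_down n ?_ ?_) <;> omega

lemma top_chain (hP : IsTiling (Kna (4*n+2)) P) :
    ∀ t : ℕ, t ≤ 2*n → topD n (2*(n:ℤ)+1+t) ∈ P := by
  intro t
  induction t with
  | zero =>
    intro _
    exact top_step hP (by push_cast; omega) (by push_cast; omega) (Or.inl (by push_cast; ring))
  | succ t IH =>
    intro ht
    refine top_step hP (by push_cast; omega) (by push_cast; omega) (Or.inr ?_)
    rw [show (2*(n:ℤ)+1+((t+1 : ℕ) : ℤ)) - 1 = 2*(n:ℤ)+1+(t : ℤ) by push_cast; ring]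
    exact IH (by omega)

lemma bot_chain (hn : 1 ≤ n) (hP : IsTiling (Kna (4*n+2)) P) :
    ∀ t : ℕ, t ≤ 2*n - 1 → botD n (2*(n:ℤ)+1+t) ∈ P := by
  intro t
  induction t with
  | zero =>
    intro _
    exact bot_step hP (by push_cast; omega) (by push_cast; omega) (Or.inl (by push_cast; ring))
  | succ t IH =>
    intro ht
    refine bot_step hP (by push_cast; omega) (by push_cast; omega) (Or.inr ?_)
    rw [show (2*(n:ℤ)+1+((t+1 : ℕ) : ℤ)) - 1 = 2*(n:ℤ)+1+(t : ℤ) by push_cast; ring]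
    exact IH (by omega)

lemma Fset_subset (hn : 1 ≤ n) (hP : IsTiling (Kna (4*n+2)) P) : Fset n ⊆ P := by
  rintro f (⟨a, ⟨ha1, ha2⟩, rfl⟩ | ⟨a, ⟨ha1, ha2⟩, rfl⟩)
  · rw [show a = 2*(n:ℤ)+1+((a - (2*n+1)).toNat : ℤ) by omega]
    exact top_chain hP _ (by omega)
  · rw [show a = 2*(n:ℤ)+1+((a - (2*n+1)).toNat : ℤ) by omega]
    exact bot_chain hn hP _ (by omega)

end chain
/-! ### Assembly -/

section assemble
variable {n : ℕ}

lemma Fset_eq_of_mem {f g : Finset (ℤ × ℤ)} (hf : f ∈ Fset n) (hg : g ∈ Fset n)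
    {x : ℤ × ℤ} (hxf : x ∈ f) (hxg : x ∈ g) : f = g := by
  obtain ⟨x1, x2⟩ := x
  rcases hf with ⟨a, ⟨ha1, ha2⟩, rfl⟩ | ⟨a, ⟨ha1, ha2⟩, rfl⟩ <;>
    rcases hg with ⟨a', ⟨hb1, hb2⟩, rfl⟩ | ⟨a', ⟨hb1, hb2⟩, rfl⟩ <;>
    simp only [topD, botD, Finset.mem_insert, Finset.mem_singleton, Prod.mk.injEq] at hxf hxg
  · rw [show a = a' by omega]
  · exfalso; omega
  · exfalso; omega
  · rw [show a = a' by omega]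

lemma Fset_domino {f : Finset (ℤ × ℤ)} (hf : f ∈ Fset n) : IsDomino f := by
  rcases hf with ⟨a, _, rfl⟩ | ⟨a, _, rfl⟩
  · refine ⟨(a, 4*(n:ℤ)+1-a), (a, 4*(n:ℤ)-a), ?_, rfl⟩
    show |a - a| + |(4*(n:ℤ)+1-a) - (4*(n:ℤ)-a)| = 1
    rw [show a - a = 0 by ring, show (4*(n:ℤ)+1-a) - (4*(n:ℤ)-a) = 1 by ring]; simp
  · refine ⟨(a, a-4*(n:ℤ)-1), (a, a-4*(n:ℤ)-2), ?_, rfl⟩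
    show |a - a| + |(a-4*(n:ℤ)-1) - (a-4*(n:ℤ)-2)| = 1
    rw [show a - a = 0 by ring, show (a-4*(n:ℤ)-1) - (a-4*(n:ℤ)-2) = 1 by ring]; simp

lemma tiling_union {Q : Set (Finset (ℤ × ℤ))} (hQ : IsTiling (Kna (4*n)) Q) :
    IsTiling (Kna (4*n+2)) (Q ∪ Fset n) := by
  obtain ⟨hd, hdisj, hun⟩ := hQ
  have hsub : ∀ d ∈ Q, (d : Set (ℤ × ℤ)) ⊆ Kna (4*n) := by
    intro d hdq
    rw [← hun]; exact Set.subset_biUnion_of_mem hdq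
  refine ⟨?_, ?_, ?_⟩
  · rintro d (hdq | hdf)
    · exact hd d hdq
    · exact Fset_domino hdf
  · rintro d (hdq | hdf) e (heq | hef) hne
    · exact hdisj hdq heq hne
    · refine Finset.disjoint_left.mpr fun {x} hxd hxe => ?_
      exact Fset_cells_out n hef hxe (hsub d hdq hxd)
    · refine Finset.disjoint_left.mpr fun {x} hxd hxe => ?_
      exact Fset_cells_out n hdf hxd (hsub e heq hxe)
    · exact Finset.disjoint_left.mpr fun {x} hxd hxe =>
        hne (Fset_eq_of_mem hdf hef hxd hxe)
  · rw [Set.biUnion_union, hun]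
    ext x
    obtain ⟨a, b⟩ := x
    simp only [Set.mem_union, Set.mem_iUnion₂, Finset.mem_coe]
    constructor
    · rintro (h | ⟨f, hf, hxf⟩)
      · exact Kna_mono n h
      · exact Fset_cells_in n hf hxf
    · intro h
      by_cases h4 : ((a, b) : ℤ × ℤ) ∈ Kna (4*n)
      · exact Or.inl h4
      · exact Or.inr (by
          obtain ⟨f, hf, hxf⟩ := ring_cover n h h4
          exact ⟨f, hf, hxf⟩)

lemma tiling_diff {P : Set (Finset (ℤ × ℤ))} (hn : 1 ≤ n) (hP : IsTiling (Kna (4*n+2)) P) :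
    IsTiling (Kna (4*n)) (P \ Fset n) := by
  have hF := Fset_subset hn hP
  obtain ⟨hd, hdisj, hun⟩ := hP
  have hsub : ∀ d ∈ P, (d : Set (ℤ × ℤ)) ⊆ Kna (4*n+2) := by
    intro d hdp
    rw [← hun]; exact Set.subset_biUnion_of_mem hdp
  refine ⟨fun d hdp => hd d hdp.1, hdisj.subset Set.diff_subset, ?_⟩
  ext x
  obtain ⟨a, b⟩ := x
  simp only [Set.mem_iUnion₂, Finset.mem_coe]
  constructor
  · rintro ⟨d, ⟨hdP, hdF⟩, hxd⟩
    have hx2 : ((a, b) : ℤ × ℤ) ∈ Kna (4*n+2) := hsub d hdP hxd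
    by_contra hx4
    obtain ⟨f, hf, hxf⟩ := ring_cover n hx2 hx4
    have hne : d ≠ f := fun h => hdF (h ▸ hf)
    exact (Finset.disjoint_left.mp (hdisj hdP (hF hf) hne) hxd) hxf
  · intro hx4
    have hx2 : ((a, b) : ℤ × ℤ) ∈ ⋃ d ∈ P, (d : Set (ℤ × ℤ)) := hun ▸ Kna_mono n hx4
    rw [Set.mem_iUnion₂] at hx2
    obtain ⟨d, hdP, hxd⟩ := hx2
    refine ⟨d, ⟨hdP, fun hdF => ?_⟩, hxd⟩
    exact Fset_cells_out n hdF hxd hx4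

lemma tiles_not_in_F {Q : Set (Finset (ℤ × ℤ))} (hQ : IsTiling (Kna (4*n)) Q)
    {d : Finset (ℤ × ℤ)} (hd : d ∈ Q) : d ∉ Fset n := by
  intro hdF
  obtain ⟨c, c', _, rfl⟩ := hQ.1 d hd
  have hc : c ∈ ({c, c'} : Finset (ℤ × ℤ)) := by simp
  have : (c : ℤ × ℤ) ∈ Kna (4*n) := by
    rw [← hQ.2.2]; exact Set.mem_biUnion hd hc
  exact Fset_cells_out n hdF hc this

end assemble

/-- `T(K_na(4n)) = T(K_na(4n+2))`. -/
theorem nonabutting_forced_even (n : ℕ) (hn : 1 ≤ n) :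
    numTilings (Kna (4 * n)) = numTilings (Kna (4 * n + 2)) := by
  have himg : {P : Set (Finset (ℤ × ℤ)) | IsTiling (Kna (4*n+2)) P} =
      (fun Q => Q ∪ Fset n) '' {Q : Set (Finset (ℤ × ℤ)) | IsTiling (Kna (4*n)) Q} := by
    ext P
    simp only [Set.mem_setOf_eq, Set.mem_image]
    constructor
    · intro hP
      refine ⟨P \ Fset n, tiling_diff hn hP, ?_⟩
      exact Set.diff_union_of_subset (Fset_subset hn hP)
    · rintro ⟨Q, hQ, rfl⟩
      exact tiling_union hQ
  have hinj : Set.InjOn (fun Q => Q ∪ Fset n)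
      {Q : Set (Finset (ℤ × ℤ)) | IsTiling (Kna (4*n)) Q} := by
    intro Q1 hQ1 Q2 hQ2 h
    simp only [Set.mem_setOf_eq] at hQ1 hQ2
    simp only at h
    ext d
    constructor
    · intro hd
      have : d ∈ Q2 ∪ Fset n := h ▸ Set.mem_union_left _ hd
      rcases this with h2 | hF
      · exact h2
      · exact absurd hF (tiles_not_in_F hQ1 hd)
    · intro hd
      have : d ∈ Q1 ∪ Fset n := h.symm ▸ Set.mem_union_left _ hd
      rcases this with h2 | hF
      · exact h2
      · exact absurd hF (tiles_not_in_F hQ2 hd)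
  unfold numTilings
  rw [himg, Set.ncard_image_of_injOn hinj]
end

section
/- For every natural number n ≥ 1, with a_1 < a_2 < … < a_{2n} the elements of 𝓐_n = {1,3,…,2n−1} ∪ {2n+2,2n+4,…,4n} listed in increasing order (i.e. a_i = 2i−1 for 1 ≤ i ≤ n and a_i = 2i for n+1 ≤ i ≤ 2n) and b_1 < b_2 < … < b_{2n} the elements of 𝓑_n = {2,4,…,2n} ∪ {2n+1,2n+3,…,4n−1} listed in increasing order (i.e. b_i = 2i for 1 ≤ i ≤ n and b_i = 2i−1 for n+1 ≤ i ≤ 2n), the following identity of positive integers holds: (∏_{1≤i<j≤2n} (a_j−a_i)) · ∏_{1≤i,j≤n} (2n−1+2j−2i) = (∏_{1≤i<j≤2n} (b_j−b_i)) · ∏_{1≤i,j≤n} (2n+1+2j−2i). -/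
open Finset

/-- With `a_i` the elements of `𝓐_n = {1,3,…,2n−1} ∪ {2n+2,…,4n}` and `b_i` the elements of
`𝓑_n = {2,4,…,2n} ∪ {2n+1,…,4n−1}` in increasing order,
`(∏_{1≤i<j≤2n} (a_j−a_i)) ∏_{1≤i,j≤n} (2n−1+2j−2i) =
 (∏_{1≤i<j≤2n} (b_j−b_i)) ∏_{1≤i,j≤n} (2n+1+2j−2i)`. -/
theorem vandermonde_AB_identity (n : ℕ) (hn : 1 ≤ n) (a b : ℕ → ℤ)
    (ha : ∀ i : ℕ, 1 ≤ i → i ≤ 2 * n → a i = if i ≤ n then 2 * (i : ℤ) - 1 else 2 * (i : ℤ))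
    (hb : ∀ i : ℕ, 1 ≤ i → i ≤ 2 * n → b i = if i ≤ n then 2 * (i : ℤ) else 2 * (i : ℤ) - 1) :
    (∏ p ∈ (Finset.Icc 1 (2 * n) ×ˢ Finset.Icc 1 (2 * n)).filter (fun p => p.1 < p.2),
        (a p.2 - a p.1)) *
      ∏ p ∈ Finset.Icc 1 n ×ˢ Finset.Icc 1 n,
        (2 * (n : ℤ) - 1 + 2 * (p.2 : ℤ) - 2 * (p.1 : ℤ)) =
    (∏ p ∈ (Finset.Icc 1 (2 * n) ×ˢ Finset.Icc 1 (2 * n)).filter (fun p => p.1 < p.2),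
        (b p.2 - b p.1)) *
      ∏ p ∈ Finset.Icc 1 n ×ˢ Finset.Icc 1 n,
        (2 * (n : ℤ) + 1 + 2 * (p.2 : ℤ) - 2 * (p.1 : ℤ)) := by
  set S := (Finset.Icc 1 (2 * n) ×ˢ Finset.Icc 1 (2 * n)).filter (fun p => p.1 < p.2) with hS
  have hsplit : ∀ f : ℕ × ℕ → ℤ, ∏ p ∈ S, f p =
      (∏ p ∈ S.filter (fun p => p.1 ≤ n ∧ n < p.2), f p) *
      ∏ p ∈ S.filter (fun p => ¬(p.1 ≤ n ∧ n < p.2)), f p := fun f =>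
    (Finset.prod_filter_mul_prod_filter_not S _ f).symm
  have hmem : ∀ p : ℕ × ℕ, p ∈ S ↔
      (1 ≤ p.1 ∧ p.1 ≤ 2 * n) ∧ (1 ≤ p.2 ∧ p.2 ≤ 2 * n) ∧ p.1 < p.2 := by
    intro p
    simp [hS, Finset.mem_filter, Finset.mem_product, Finset.mem_Icc, and_assoc]
  -- on pairs within the same block, a- and b-differences agree
  have hC : ∏ p ∈ S.filter (fun p => ¬(p.1 ≤ n ∧ n < p.2)), (a p.2 - a p.1)
          = ∏ p ∈ S.filter (fun p => ¬(p.1 ≤ n ∧ n < p.2)), (b p.2 - b p.1) := by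
    refine Finset.prod_congr rfl ?_
    intro p hp
    rw [Finset.mem_filter] at hp
    obtain ⟨hpS, hnot⟩ := hp
    rw [hmem] at hpS
    obtain ⟨⟨h11, h12⟩, ⟨h21, h22⟩, hlt⟩ := hpS
    rw [ha _ h11 h12, ha _ h21 h22, hb _ h11 h12, hb _ h21 h22]
    by_cases h1 : p.1 ≤ n
    · have h2 : p.2 ≤ n := by omega
      simp only [h1, h2, if_pos]
      ring
    · have h2 : ¬ p.2 ≤ n := by omega
      simp only [h1, h2, if_neg, if_false]
      ring
  -- cross pairs for a give the RHS correction product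
  have hA : ∏ p ∈ S.filter (fun p => p.1 ≤ n ∧ n < p.2), (a p.2 - a p.1)
      = ∏ p ∈ Finset.Icc 1 n ×ˢ Finset.Icc 1 n,
          (2 * (n : ℤ) + 1 + 2 * (p.2 : ℤ) - 2 * (p.1 : ℤ)) := by
    refine Finset.prod_nbij' (fun p => (p.1, p.2 - n)) (fun p => (p.1, p.2 + n)) ?_ ?_ ?_ ?_ ?_
    · intro p hp
      rw [Finset.mem_filter, hmem] at hp
      simp only [Finset.mem_product, Finset.mem_Icc]
      omega
    · intro p hp
      simp only [Finset.mem_product, Finset.mem_Icc] at hp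
      rw [Finset.mem_filter, hmem]
      simp only
      omega
    · intro p hp
      obtain ⟨x, y⟩ := p
      rw [Finset.mem_filter, hmem] at hp
      simp only [Prod.mk.injEq]
      exact ⟨trivial, by omega⟩
    · intro p hp
      obtain ⟨x, y⟩ := p
      simp only [Finset.mem_product, Finset.mem_Icc] at hp
      simp only [Prod.mk.injEq]
      exact ⟨trivial, by omega⟩
    · intro p hp
      rw [Finset.mem_filter, hmem] at hp
      obtain ⟨⟨⟨h11, h12⟩, ⟨h21, h22⟩, hlt⟩, h1n, h2n⟩ := hp
      rw [ha _ h11 h12, ha _ h21 h22]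
      have : ¬ p.2 ≤ n := by omega
      simp only [h1n, this, if_pos, if_neg, if_false]
      have hc : ((p.2 - n : ℕ) : ℤ) = (p.2 : ℤ) - n := by
        have := Nat.cast_sub (le_of_lt h2n) (R := ℤ)
        exact this
      rw [hc]
      ring
  -- cross pairs for b give the LHS correction product
  have hB : ∏ p ∈ S.filter (fun p => p.1 ≤ n ∧ n < p.2), (b p.2 - b p.1)
      = ∏ p ∈ Finset.Icc 1 n ×ˢ Finset.Icc 1 n,
          (2 * (n : ℤ) - 1 + 2 * (p.2 : ℤ) - 2 * (p.1 : ℤ)) := by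
    refine Finset.prod_nbij' (fun p => (p.1, p.2 - n)) (fun p => (p.1, p.2 + n)) ?_ ?_ ?_ ?_ ?_
    · intro p hp
      rw [Finset.mem_filter, hmem] at hp
      simp only [Finset.mem_product, Finset.mem_Icc]
      omega
    · intro p hp
      simp only [Finset.mem_product, Finset.mem_Icc] at hp
      rw [Finset.mem_filter, hmem]
      simp only
      omega
    · intro p hp
      obtain ⟨x, y⟩ := p
      rw [Finset.mem_filter, hmem] at hp
      simp only [Prod.mk.injEq]
      exact ⟨trivial, by omega⟩
    · intro p hp
      obtain ⟨x, y⟩ := p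
      simp only [Finset.mem_product, Finset.mem_Icc] at hp
      simp only [Prod.mk.injEq]
      exact ⟨trivial, by omega⟩
    · intro p hp
      rw [Finset.mem_filter, hmem] at hp
      obtain ⟨⟨⟨h11, h12⟩, ⟨h21, h22⟩, hlt⟩, h1n, h2n⟩ := hp
      rw [hb _ h11 h12, hb _ h21 h22]
      have : ¬ p.2 ≤ n := by omega
      simp only [h1n, this, if_pos, if_neg, if_false]
      have hc : ((p.2 - n : ℕ) : ℤ) = (p.2 : ℤ) - n := Nat.cast_sub (le_of_lt h2n)
      rw [hc]
      ring
  rw [hsplit (fun p => a p.2 - a p.1), hsplit (fun p => b p.2 - b p.1), hA, hB, hC]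
  ring
end
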